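/- Let R be a commutative Noetherian ring, p a prime ideal of R, and r a positive integer. If there exist a finitely generated R-module M and a proper submodule N of M whose generalized prime ideal factorization is P_M(N) = p^r (i.e., M has an RPE filtration over N of length r in which every prime is p), then p^r ≠ p^{r-1}. -/

import Mathlib

variable {R : Type*} [CommRing R] {M : Type*} [AddCommGroup M] [Module R M]

/-- The colon submodule `(N :_M I) = {x ∈ M | I • x ⊆ N}`. -/
def colonSubmodule (N : Submodule R M) (I : Ideal R) : Submodule R M where
  carrier := {x | ∀ a ∈ I, a • x ∈ N}
  add_mem' := fun hx hy a ha => by simpa [smul_add] using N.add_mem (hx a ha) (hy a ha)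
  zero_mem' := fun a _ => by simp
  smul_mem' := fun c x hx a ha => by
    rw [smul_comm]
    exact N.smul_mem c (hx a ha)

/-- `K` is a `p`-prime extension of `N`, i.e. `N` is a `p`-prime submodule of `K`. -/
def IsPrimeExt (p : Ideal R) (N K : Submodule R M) : Prop :=
  N < K ∧ N.colon K = p ∧ ∀ a : R, ∀ x ∈ K, a • x ∈ N → x ∈ N ∨ a ∈ p

/-- The associated primes of `T / N` for submodules `N ≤ T ≤ M`. -/
def assOf (R : Type*) {M : Type*} [CommRing R] [AddCommGroup M] [Module R M]
    (N T : Submodule R M) : Set (Ideal R) :=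
  associatedPrimes R ↥(T.map N.mkQ)

/-- `K` is a maximal `p`-prime extension of `N` inside `T`. -/
def IsMaximalPrimeExtIn (T : Submodule R M) (p : Ideal R) (N K : Submodule R M) : Prop :=
  K ≤ T ∧ IsPrimeExt p N K ∧ ∀ L ≤ T, IsPrimeExt p N L → ¬ K < L

/-- `K` is a regular `p`-prime extension of `N` inside `T`: a maximal `p`-prime
extension where `p` is a maximal element of `Ass (T/N)`. -/
def IsRegularPrimeExtIn (T : Submodule R M) (p : Ideal R) (N K : Submodule R M) : Prop :=
  IsMaximalPrimeExtIn T p N K ∧ Maximal (· ∈ assOf R N T) p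

/-- A regular prime extension (RPE) filtration inside `T` with primes `p i`. -/
def IsRPEFiltrationIn (T : Submodule R M) {n : ℕ}
    (F : Fin (n + 1) → Submodule R M) (p : Fin n → Ideal R) : Prop :=
  ∀ i : Fin n, IsRegularPrimeExtIn T (p i) (F i.castSucc) (F i.succ)

/-- The generalized prime ideal factorization of `N` in `T` is given by the multiset `s`:
there is an RPE filtration of `T` over `N` whose multiset of primes is `s`. -/
def HasGPIF (N T : Submodule R M) (s : Multiset (Ideal R)) : Prop :=
  ∃ (n : ℕ) (F : Fin (n + 1) → Submodule R M) (p : Fin n → Ideal R),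
    F 0 = N ∧ F (Fin.last n) = T ∧ IsRPEFiltrationIn T F p ∧ (List.ofFn p : Multiset (Ideal R)) = s

lemma colonSubmodule_one (N : Submodule R M) : colonSubmodule N (1 : Ideal R) = N := by
  ext x
  refine ⟨fun hx => by simpa using hx 1 (by simp), fun hx a _ => N.smul_mem a hx⟩

lemma colonSubmodule_mul (N : Submodule R M) (I J : Ideal R) :
    colonSubmodule N (I * J) = colonSubmodule (colonSubmodule N I) J := by
  ext x
  refine ⟨fun hx b hb a ha => smul_smul a b x ▸ hx _ (Ideal.mul_mem_mul ha hb), fun hx c hc => ?_⟩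
  refine Submodule.smul_induction_on hc (fun a ha b hb => smul_smul a b x ▸ hx b hb a ha) ?_
  exact fun c d hc hd => by simpa [add_smul] using N.add_mem hc hd

lemma colonSubmodule_inf (A B : Submodule R M) (I : Ideal R) :
    colonSubmodule (A ⊓ B) I = colonSubmodule A I ⊓ colonSubmodule B I := by
  ext x
  exact ⟨fun hx => ⟨fun a ha => (hx a ha).1, fun a ha => (hx a ha).2⟩,
    fun hx a ha => ⟨hx.1 a ha, hx.2 a ha⟩⟩

lemma le_colonSubmodule (N : Submodule R M) (I : Ideal R) : N ≤ colonSubmodule N I :=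
  fun _ hx a _ => N.smul_mem a hx

lemma IsPrimeExt.le_colonSubmodule {p : Ideal R} {L K : Submodule R M} (h : IsPrimeExt p L K) :
    K ≤ colonSubmodule L p := by
  intro x hx a ha
  rw [← h.2.1] at ha
  exact Submodule.mem_colon.mp ha x hx

/-- The annihilator of the class of `x` in `T/L` contains `p`, so it lies in an associated prime
of `T/L`, which is `p` by maximality. -/
lemma smul_mem_or_mem_of_maximal_assOf [IsNoetherianRing R] {p : Ideal R} {L T : Submodule R M}
    (hp : Maximal (· ∈ assOf R L T) p) {a : R} {x : M} (hx : x ∈ colonSubmodule L p)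
    (hxT : x ∈ T) (hax : a • x ∈ L) : x ∈ L ∨ a ∈ p := by
  by_cases hxL : x ∈ L
  · exact Or.inl hxL
  right
  let e : ↥(T.map L.mkQ) := ⟨L.mkQ x, x, hxT, rfl⟩
  have he : e ≠ 0 := fun h0 =>
    hxL ((Submodule.Quotient.mk_eq_zero L).mp (congrArg Subtype.val h0))
  have hann : ∀ b : R, b • x ∈ L → b ∈ (⊥ : Submodule R _).colon {e} := fun b hb => by
    rw [Submodule.mem_colon_singleton, Submodule.mem_bot]
    exact Subtype.ext ((Submodule.Quotient.mk_eq_zero L).mpr hb)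
  obtain ⟨q, hq, hle⟩ := exists_le_isAssociatedPrime_of_isNoetherianRing R e he
  have hpq : p ≤ q := fun b hb => hle (hann b (hx b hb))
  exact hp.2 hq hpq (hle (hann a hax))

lemma isPrimeExt_colonSubmodule_inf [IsNoetherianRing R] {p : Ideal R} {L K T : Submodule R M}
    (hK : IsPrimeExt p L K) (hKT : K ≤ T) (hp : Maximal (· ∈ assOf R L T) p) :
    IsPrimeExt p L (colonSubmodule L p ⊓ T) := by
  have hKS : K ≤ colonSubmodule L p ⊓ T := le_inf hK.le_colonSubmodule hKT
  refine ⟨hK.1.trans_le hKS, le_antisymm ?_ ?_, ?_⟩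
  · exact (Submodule.colon_mono le_rfl hKS).trans hK.2.1.le
  · exact fun b hb => Submodule.mem_colon.mpr fun x hx => hx.1 b hb
  · exact fun a x hx hax => smul_mem_or_mem_of_maximal_assOf hp hx.1 hx.2 hax

lemma IsRegularPrimeExtIn.eq_colonSubmodule_inf [IsNoetherianRing R] {p : Ideal R}
    {L K T : Submodule R M} (h : IsRegularPrimeExtIn T p L K) :
    K = colonSubmodule L p ⊓ T := by
  obtain ⟨⟨hKT, hK, hmax⟩, hp⟩ := h
  have hKS : K ≤ colonSubmodule L p ⊓ T := le_inf hK.le_colonSubmodule hKT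
  exact hKS.lt_or_eq.resolve_left
    (hmax _ inf_le_right (isPrimeExt_colonSubmodule_inf hK hKT hp))

lemma IsRPEFiltrationIn.eq_colonSubmodule_pow_inf [IsNoetherianRing R] {T : Submodule R M}
    {n : ℕ} {F : Fin (n + 1) → Submodule R M} {p : Ideal R}
    (hF : IsRPEFiltrationIn T F fun _ => p) (h0 : F 0 ≤ T) (i : Fin (n + 1)) :
    F i = colonSubmodule (F 0) (p ^ (i : ℕ)) ⊓ T := by
  induction i using Fin.induction with
  | zero => rw [Fin.val_zero, pow_zero, colonSubmodule_one, inf_eq_left.mpr h0]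
  | succ i ih =>
    rw [(hF i).eq_colonSubmodule_inf, ih, colonSubmodule_inf, inf_assoc,
      inf_eq_right.mpr (le_colonSubmodule T p), ← colonSubmodule_mul, ← pow_succ]
    rfl

lemma HasGPIF.exists_filtration_of_replicate {N T : Submodule R M} {r : ℕ} {p : Ideal R}
    (h : HasGPIF N T (Multiset.replicate r p)) :
    ∃ F : Fin (r + 1) → Submodule R M, IsRPEFiltrationIn T F fun _ => p := by
  obtain ⟨n, F, q, -, -, hF, hq⟩ := h
  obtain ⟨hn, hqp⟩ := Multiset.eq_replicate.mp hq
  simp only [Multiset.coe_card, List.length_ofFn] at hn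
  subst hn
  have hq : q = fun _ => p :=
    funext fun i => hqp _ (Multiset.mem_coe.mpr ((List.mem_ofFn' q _).mpr ⟨i, rfl⟩))
  exact ⟨F, hq ▸ hF⟩

/-- Along an RPE filtration with all primes `p` the `i`-th step is `(F 0 :_M p^i)`, so the
last step being proper forces `(F 0 :_M p^(r-1)) ≠ (F 0 :_M p^r)`. -/
theorem pow_ne_pow_pred_of_gpif_general {R : Type*} [CommRing R] [IsNoetherianRing R]
    {M : Type*} [AddCommGroup M] [Module R M]
    (p : Ideal R) (r : ℕ) (hr : 0 < r)
    (N : Submodule R M)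
    (h : HasGPIF N ⊤ (Multiset.replicate r p)) :
    p ^ r ≠ p ^ (r - 1) := by
  obtain ⟨m, rfl⟩ := Nat.exists_eq_add_one_of_ne_zero hr.ne'
  obtain ⟨F, hF⟩ := h.exists_filtration_of_replicate
  have hstep := (hF (Fin.last m)).1.2.1.1
  rw [hF.eq_colonSubmodule_pow_inf le_top (Fin.last m).castSucc,
    hF.eq_colonSubmodule_pow_inf le_top (Fin.last m).succ] at hstep
  intro heq
  simp only [Fin.val_castSucc, Fin.val_last, Fin.val_succ, Nat.add_sub_cancel] at heq hstep
  exact (heq ▸ hstep).ne rfl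

/-- If `p^r` is the generalized prime ideal factorization of some proper submodule `N`
of a finitely generated module `M` (i.e. there is an RPE filtration of `M` over `N` of
length `r` all of whose primes are `p`), then `p^r ≠ p^(r-1)`. -/
theorem pow_ne_pow_pred_of_gpif {R : Type*} [CommRing R] [IsNoetherianRing R]
    {M : Type*} [AddCommGroup M] [Module R M] [Module.Finite R M]
    (p : Ideal R) (hp : p.IsPrime) (r : ℕ) (hr : 0 < r)
    (N : Submodule R M) (hN : N ≠ ⊤)
    (h : HasGPIF N ⊤ (Multiset.replicate r p)) :
    p ^ r ≠ p ^ (r - 1) :=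
  pow_ne_pow_pred_of_gpif_general p r hr N h
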